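/- Suppose a drawing of a graph K on vertex set V is obtained by routing, for each pair {u,v}, the edge along a randomly chosen path P_{uv} ∈ P_{uv} sampled with probability φ(P) (where Σ_{P∈P_{uv}} φ(P) = 1), independently over pairs, in a string representation of a graph G with n vertices and m edges. If two edges {u,v}, {u',v'} can only intersect when P_{uv} ∼ P_{u'v'} (meaning some w ∈ P_{uv}, w' ∈ P_{u'v'} satisfy {w,w'} ∈ E(G) or w = w'), then the expected number of intersecting pairs of edges is at most 8·m·vcong(φ)², where vcong(φ) = max_w Σ_{P ∋ w} c_P(w)φ(P) with c_P(w) = 1 for interior vertices and 1/2 for endpoints. -/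

import Mathlib

/-!
Two edges routed along `P_p` and `P_q` (`p ≠ q`) can cross only if some pair `(w, w')` with
`w = w'` or `w ~ w'` has `w ∈ P_p` and `w' ∈ P_q`. A union bound over these pairs and the
independence of `P_p` and `P_q` bound the expected number of crossing ordered pairs by
`∑_{(w, w')} (∑_p Pr[w ∈ P_p]) (∑_q Pr[w' ∈ P_q])`. Each factor is at most `2 vcong(φ)`, since
`vcong` charges an endpoint only half, and a connected graph on `n ≥ 2` vertices has
`n + 2m ≤ 4m` such pairs `(w, w')`.
-/

open Finset

variable {V : Type*} [Fintype V] [DecidableEq V] [LinearOrder V]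

/-- The congestion of a vertex `w` under a multicommodity flow `φ` (pairs of vertices
represented by ordered pairs `u < v`): a path through `w` contributes `φ(P)` if `w` is an
interior vertex and `φ(P)/2` if `w` is an endpoint. -/
noncomputable def vertexCong17 (G : SimpleGraph V) [DecidableRel G.Adj]
    (φ : ∀ u v : V, G.Path u v → ℝ) (w : V) : ℝ :=
  ∑ p ∈ Finset.univ.filter (fun p : V × V => p.1 < p.2),
    ∑ P : G.Path p.1 p.2,
      (if w ∈ (P : G.Walk p.1 p.2).support then
        (if w = p.1 ∨ w = p.2 then (1 : ℝ) / 2 else 1) else 0) * φ p.1 p.2 P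

/-- The maximum vertex congestion of the flow `φ`. -/
noncomputable def vcong17 (G : SimpleGraph V) [DecidableRel G.Adj]
    (φ : ∀ u v : V, G.Path u v → ℝ) : ℝ :=
  sSup {x : ℝ | ∃ w : V, x = vertexCong17 G φ w}

theorem sum_mul_mul_eq_mul_of_joint {Ω α β R : Type*} [Fintype Ω] [Fintype α] [Fintype β]
    [DecidableEq α] [DecidableEq β] [CommSemiring R] (Pr : Ω → R) (X : Ω → α) (Y : Ω → β)
    (f : α → R) (g : β → R)
    (hjoint : ∀ a b, ∑ ω ∈ univ.filter (fun ω => X ω = a ∧ Y ω = b), Pr ω = f a * g b)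
    (F : α → R) (H : β → R) :
    ∑ ω, Pr ω * (F (X ω) * H (Y ω)) = (∑ a, f a * F a) * ∑ b, g b * H b := by
  rw [← sum_fiberwise univ (fun ω => (X ω, Y ω)), Fintype.sum_prod_type, sum_mul_sum]
  refine sum_congr rfl fun a _ => sum_congr rfl fun b _ => ?_
  calc ∑ ω ∈ univ.filter (fun ω => (X ω, Y ω) = (a, b)), Pr ω * (F (X ω) * H (Y ω))
      = (∑ ω ∈ univ.filter (fun ω => X ω = a ∧ Y ω = b), Pr ω) * (F a * H b) := by
        simp only [Prod.mk.injEq, sum_mul]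
        exact sum_congr rfl fun ω hω => by rw [(mem_filter.1 hω).2.1, (mem_filter.1 hω).2.2]
    _ = f a * F a * (g b * H b) := by rw [hjoint]; ring

theorem boole_le_sum_boole {ι R : Type*} [Semiring R] [PartialOrder R] [IsOrderedRing R]
    (s : Finset ι) {P : Prop} [Decidable P] {Q : ι → Prop} [DecidablePred Q]
    (h : P → ∃ i ∈ s, Q i) :
    (if P then 1 else 0 : R) ≤ ∑ i ∈ s, if Q i then 1 else 0 := by
  have hnonneg : ∀ i ∈ s, (0 : R) ≤ if Q i then 1 else 0 := fun i _ => by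
    split_ifs <;> simp
  by_cases hP : P
  · obtain ⟨i, hi, hQ⟩ := h hP
    simpa [hP, hQ] using single_le_sum hnonneg hi
  · rw [if_neg hP]
    exact sum_nonneg hnonneg

variable (V) in
def ltPairs : Finset (V × V) := univ.filter fun p => p.1 < p.2

omit [DecidableEq V] in
@[simp] theorem mem_ltPairs {p : V × V} : p ∈ ltPairs V ↔ p.1 < p.2 := by
  simp [ltPairs]

def supportIndicator {G : SimpleGraph V} {u v : V} (P : G.Path u v) (w : V) : ℝ :=
  if w ∈ (P : G.Walk u v).support then 1 else 0

omit [Fintype V] [LinearOrder V] in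
theorem supportIndicator_nonneg {G : SimpleGraph V} {u v : V} (P : G.Path u v) (w : V) :
    0 ≤ supportIndicator P w := by
  unfold supportIndicator
  split_ifs <;> norm_num

section Congestion

variable (G : SimpleGraph V) [DecidableRel G.Adj] (φ : ∀ u v : V, G.Path u v → ℝ)

def closePairs : Finset (V × V) := univ.filter fun ww => ww.1 = ww.2 ∨ G.Adj ww.1 ww.2

omit [LinearOrder V] in
theorem card_closePairs_le [Nontrivial V] (hconn : G.Connected) :
    #(closePairs G) ≤ 4 * #G.edgeFinset := by
  have hdiag : #(univ.filter fun ww : V × V => ww.1 = ww.2) = Fintype.card V := by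
    rw [← card_univ, ← diag_card (univ : Finset V), diag_eq_filter, univ_product_univ]
  have hspan : Fintype.card V ≤ #G.edgeFinset + 1 := by
    have := hconn.card_vert_le_card_edgeSet_add_one
    rwa [Nat.card_eq_fintype_card, Nat.card_eq_fintype_card, SimpleGraph.card_edgeSet] at this
  have htwo : 1 < Fintype.card V := Fintype.one_lt_card
  calc #(closePairs G) ≤ Fintype.card V + 2 * #G.edgeFinset := by
        rw [closePairs, filter_or, ← hdiag, G.two_mul_card_edgeFinset]
        exact card_union_le _ _
    _ ≤ 4 * #G.edgeFinset := by omega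

noncomputable def passProb (w : V) (p : V × V) : ℝ :=
  ∑ P : G.Path p.1 p.2, φ p.1 p.2 P * supportIndicator P w

variable {G φ}

omit [LinearOrder V] in
theorem passProb_nonneg (hφ0 : ∀ u v (P : G.Path u v), 0 ≤ φ u v P) (w : V) (p : V × V) :
    0 ≤ passProb G φ w p :=
  sum_nonneg fun P _ => mul_nonneg (hφ0 _ _ _) (supportIndicator_nonneg P w)

theorem sum_passProb_le_two_mul_vertexCong17 (hφ0 : ∀ u v (P : G.Path u v), 0 ≤ φ u v P)
    (w : V) : ∑ p ∈ ltPairs V, passProb G φ w p ≤ 2 * vertexCong17 G φ w := by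
  rw [vertexCong17, mul_sum]
  refine sum_le_sum fun p _ => ?_
  rw [passProb, mul_sum]
  refine sum_le_sum fun P _ => ?_
  have := hφ0 p.1 p.2 P
  unfold supportIndicator
  split_ifs <;> linarith

theorem vertexCong17_le_vcong17 (w : V) : vertexCong17 G φ w ≤ vcong17 G φ := by
  have hrange : {x : ℝ | ∃ w : V, x = vertexCong17 G φ w} = Set.range (vertexCong17 G φ) := by
    ext; simp [eq_comm]
  rw [vcong17, hrange]
  exact le_csSup (Set.finite_range _).bddAbove ⟨w, rfl⟩

theorem sum_passProb_le_two_mul_vcong17 (hφ0 : ∀ u v (P : G.Path u v), 0 ≤ φ u v P)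
    (w : V) : ∑ p ∈ ltPairs V, passProb G φ w p ≤ 2 * vcong17 G φ :=
  (sum_passProb_le_two_mul_vertexCong17 hφ0 w).trans
    (mul_le_mul_of_nonneg_left (vertexCong17_le_vcong17 w) zero_le_two)

theorem sum_passProb_mul_passProb_le (hφ0 : ∀ u v (P : G.Path u v), 0 ≤ φ u v P)
    (hconn : G.Connected) :
    ∑ pq ∈ (ltPairs V).offDiag, ∑ ww ∈ closePairs G,
        passProb G φ ww.1 pq.1 * passProb G φ ww.2 pq.2
      ≤ 4 * #G.edgeFinset * (2 * vcong17 G φ) ^ 2 := by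
  rcases subsingleton_or_nontrivial V with hV | hV
  · have : ltPairs V = ∅ := eq_empty_of_forall_notMem fun p hp =>
      (mem_ltPairs.1 hp).ne (Subsingleton.elim _ _)
    simp only [this, offDiag_empty, sum_empty]
    positivity
  have hsum : ∀ w, ∑ p ∈ ltPairs V, passProb G φ w p ≤ 2 * vcong17 G φ :=
    sum_passProb_le_two_mul_vcong17 hφ0
  have hsum0 : ∀ w, 0 ≤ ∑ p ∈ ltPairs V, passProb G φ w p :=
    fun w => sum_nonneg fun p _ => passProb_nonneg hφ0 w p
  calc _ ≤ ∑ pq ∈ ltPairs V ×ˢ ltPairs V, ∑ ww ∈ closePairs G,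
          passProb G φ ww.1 pq.1 * passProb G φ ww.2 pq.2 :=
        sum_le_sum_of_subset_of_nonneg (fun pq hpq =>
          mem_product.2 ⟨(mem_offDiag.1 hpq).1, (mem_offDiag.1 hpq).2.1⟩)
          fun pq _ _ => sum_nonneg fun ww _ =>
            mul_nonneg (passProb_nonneg hφ0 _ _) (passProb_nonneg hφ0 _ _)
    _ = ∑ ww ∈ closePairs G, (∑ p ∈ ltPairs V, passProb G φ ww.1 p) *
          ∑ q ∈ ltPairs V, passProb G φ ww.2 q := by
      rw [sum_comm]
      exact sum_congr rfl fun ww _ => by rw [sum_product, sum_mul_sum]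
    _ ≤ ∑ _ww ∈ closePairs G, (2 * vcong17 G φ) * (2 * vcong17 G φ) :=
        sum_le_sum fun ww _ => mul_le_mul (hsum ww.1) (hsum ww.2) (hsum0 ww.2)
          ((hsum0 ww.1).trans (hsum ww.1))
    _ = #(closePairs G) * (2 * vcong17 G φ) ^ 2 := by rw [sum_const, nsmul_eq_mul, sq]
    _ ≤ 4 * #G.edgeFinset * (2 * vcong17 G φ) ^ 2 := by
      gcongr
      exact_mod_cast card_closePairs_le G hconn

end Congestion

section Crossings

variable {G : SimpleGraph V} [DecidableRel G.Adj]

theorem card_crossings_le (R : ∀ u v : V, G.Path u v) (cross : V × V → V × V → Bool)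
    (hconf : ∀ p q : V × V, p.1 < p.2 → q.1 < q.2 → cross p q = true →
      ∃ w ∈ (R p.1 p.2 : G.Walk p.1 p.2).support,
        ∃ w' ∈ (R q.1 q.2 : G.Walk q.1 q.2).support, w = w' ∨ G.Adj w w') :
    (#(univ.filter fun pq : (V × V) × (V × V) =>
        pq.1.1 < pq.1.2 ∧ pq.2.1 < pq.2.2 ∧ pq.1 ≠ pq.2 ∧ cross pq.1 pq.2 = true) : ℝ)
      ≤ ∑ pq ∈ (ltPairs V).offDiag, ∑ ww ∈ closePairs G,
          supportIndicator (R pq.1.1 pq.1.2) ww.1 * supportIndicator (R pq.2.1 pq.2.2) ww.2 := by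
  have hfilter : (univ.filter fun pq : (V × V) × (V × V) =>
      pq.1.1 < pq.1.2 ∧ pq.2.1 < pq.2.2 ∧ pq.1 ≠ pq.2 ∧ cross pq.1 pq.2 = true)
      = (ltPairs V).offDiag.filter fun pq => cross pq.1 pq.2 = true := by
    ext; simp [and_assoc]
  rw [hfilter, natCast_card_filter]
  refine sum_le_sum fun pq hpq => ?_
  simp only [supportIndicator, ite_zero_mul_ite_zero, mul_one]
  refine boole_le_sum_boole _ fun hcross => ?_
  have hpq' := mem_offDiag.1 hpq
  obtain ⟨w, hw, w', hw', hww⟩ :=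
    hconf pq.1 pq.2 (mem_ltPairs.1 hpq'.1) (mem_ltPairs.1 hpq'.2.1) hcross
  exact ⟨(w, w'), by simpa [closePairs] using hww, hw, hw'⟩

theorem expected_crossings_le {φ : ∀ u v : V, G.Path u v → ℝ}
    {Ω : Type*} [Fintype Ω] {Pr : Ω → ℝ} (hPr0 : ∀ ω, 0 ≤ Pr ω) {PW : Ω → ∀ u v : V, G.Path u v}
    (hjoint : ∀ u v u' v' : V, u < v → u' < v' → (u, v) ≠ (u', v') →
      ∀ (P : G.Path u v) (P' : G.Path u' v'),
        ∑ ω ∈ Finset.univ.filter (fun ω => PW ω u v = P ∧ PW ω u' v' = P'), Pr ω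
          = φ u v P * φ u' v' P')
    {Inter : Ω → V × V → V × V → Bool}
    (hconf : ∀ ω (p q : V × V), p.1 < p.2 → q.1 < q.2 → Inter ω p q = true →
      ∃ w ∈ (PW ω p.1 p.2 : G.Walk p.1 p.2).support,
        ∃ w' ∈ (PW ω q.1 q.2 : G.Walk q.1 q.2).support, w = w' ∨ G.Adj w w') :
    ∑ ω, Pr ω *
        (((Finset.univ.filter (fun pq : (V × V) × (V × V) =>
          pq.1.1 < pq.1.2 ∧ pq.2.1 < pq.2.2 ∧ pq.1 ≠ pq.2 ∧
            Inter ω pq.1 pq.2 = true)).card : ℝ) / 2)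
      ≤ (∑ pq ∈ (ltPairs V).offDiag, ∑ ww ∈ closePairs G,
          passProb G φ ww.1 pq.1 * passProb G φ ww.2 pq.2) / 2 := by
  calc _ ≤ ∑ ω, Pr ω * ((∑ pq ∈ (ltPairs V).offDiag, ∑ ww ∈ closePairs G,
          supportIndicator (PW ω pq.1.1 pq.1.2) ww.1 *
            supportIndicator (PW ω pq.2.1 pq.2.2) ww.2) / 2) :=
        sum_le_sum fun ω _ => mul_le_mul_of_nonneg_left (div_le_div_of_nonneg_right
          (card_crossings_le (PW ω) (Inter ω) (hconf ω)) zero_le_two) (hPr0 ω)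
    _ = (∑ pq ∈ (ltPairs V).offDiag, ∑ ww ∈ closePairs G, ∑ ω, Pr ω *
          (supportIndicator (PW ω pq.1.1 pq.1.2) ww.1 *
            supportIndicator (PW ω pq.2.1 pq.2.2) ww.2)) / 2 := by
      simp_rw [mul_div_assoc', ← sum_div, mul_sum]
      rw [sum_comm]
      exact congrArg (· / 2) (sum_congr rfl fun _ _ => sum_comm)
    _ = _ := by
      refine congrArg (· / 2) (sum_congr rfl fun pq hpq => sum_congr rfl fun ww _ => ?_)
      obtain ⟨hp, hq, hpq⟩ := mem_offDiag.1 hpq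
      exact sum_mul_mul_eq_mul_of_joint Pr _ _ _ _ (hjoint _ _ _ _ (mem_ltPairs.1 hp)
        (mem_ltPairs.1 hq) (by simpa using hpq))
        (supportIndicator · ww.1) (supportIndicator · ww.2)

end Crossings

theorem stmt_17_general (G : SimpleGraph V) [DecidableRel G.Adj] (hconn : G.Connected)
    (m : ℕ) (hm : G.edgeFinset.card = m)
    (φ : ∀ u v : V, G.Path u v → ℝ)
    (hφ0 : ∀ u v (P : G.Path u v), 0 ≤ φ u v P)
    (Ω : Type*) [Fintype Ω] (Pr : Ω → ℝ)
    (hPr0 : ∀ ω, 0 ≤ Pr ω)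
    (PW : Ω → ∀ u v : V, G.Path u v)
    (hjoint : ∀ u v u' v' : V, u < v → u' < v' → (u, v) ≠ (u', v') →
      ∀ (P : G.Path u v) (P' : G.Path u' v'),
        ∑ ω ∈ Finset.univ.filter (fun ω => PW ω u v = P ∧ PW ω u' v' = P'), Pr ω
          = φ u v P * φ u' v' P')
    (Inter : Ω → V × V → V × V → Bool)
    (hconf : ∀ ω (p q : V × V), p.1 < p.2 → q.1 < q.2 → Inter ω p q = true →
      ∃ w ∈ (PW ω p.1 p.2 : G.Walk p.1 p.2).support,
        ∃ w' ∈ (PW ω q.1 q.2 : G.Walk q.1 q.2).support, w = w' ∨ G.Adj w w') :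
    ∑ ω, Pr ω *
        (((Finset.univ.filter (fun pq : (V × V) × (V × V) =>
          pq.1.1 < pq.1.2 ∧ pq.2.1 < pq.2.2 ∧ pq.1 ≠ pq.2 ∧
            Inter ω pq.1 pq.2 = true)).card : ℝ) / 2)
      ≤ 8 * (m : ℝ) * (vcong17 G φ) ^ 2 := by
  subst hm
  calc _ ≤ (∑ pq ∈ (ltPairs V).offDiag, ∑ ww ∈ closePairs G,
          passProb G φ ww.1 pq.1 * passProb G φ ww.2 pq.2) / 2 :=
        expected_crossings_le hPr0 hjoint hconf
    _ ≤ 4 * #G.edgeFinset * (2 * vcong17 G φ) ^ 2 / 2 := by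
      gcongr
      exact sum_passProb_mul_passProb_le hφ0 hconn
    _ = 8 * #G.edgeFinset * vcong17 G φ ^ 2 := by ring

/-- Expected number of crossings when drawing `K_n` along random flow paths in a string
representation of `G`: if each edge `{u,v}` of the complete graph is routed along a random
path `P_{uv}` sampled with probability `φ(P)` (independently over pairs, encoded by a
finite sample space `Ω` with the product joint distribution), and two edges can only
intersect when their chosen paths contain vertices `w, w'` with `w = w'` or `{w,w'} ∈ E(G)`,
then the expected number of intersecting (unordered) pairs of edges is at most
`8·m·vcong(φ)²`. -/
theorem stmt_17 (G : SimpleGraph V) [DecidableRel G.Adj] (hconn : G.Connected)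
    (n m : ℕ) (hn : Fintype.card V = n) (hm : G.edgeFinset.card = m)
    (φ : ∀ u v : V, G.Path u v → ℝ)
    (hφ0 : ∀ u v (P : G.Path u v), 0 ≤ φ u v P)
    (hφ1 : ∀ u v : V, u < v → ∑ P : G.Path u v, φ u v P = 1)
    (Ω : Type*) [Fintype Ω] [DecidableEq Ω] (Pr : Ω → ℝ)
    (hPr0 : ∀ ω, 0 ≤ Pr ω) (hPr1 : ∑ ω, Pr ω = 1)
    (PW : Ω → ∀ u v : V, G.Path u v)
    (hjoint : ∀ u v u' v' : V, u < v → u' < v' → (u, v) ≠ (u', v') →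
      ∀ (P : G.Path u v) (P' : G.Path u' v'),
        ∑ ω ∈ Finset.univ.filter (fun ω => PW ω u v = P ∧ PW ω u' v' = P'), Pr ω
          = φ u v P * φ u' v' P')
    (Inter : Ω → V × V → V × V → Bool)
    (hsym : ∀ ω p q, Inter ω p q = Inter ω q p)
    (hconf : ∀ ω (p q : V × V), p.1 < p.2 → q.1 < q.2 → Inter ω p q = true →
      ∃ w ∈ (PW ω p.1 p.2 : G.Walk p.1 p.2).support,
        ∃ w' ∈ (PW ω q.1 q.2 : G.Walk q.1 q.2).support, w = w' ∨ G.Adj w w') :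
    ∑ ω, Pr ω *
        (((Finset.univ.filter (fun pq : (V × V) × (V × V) =>
          pq.1.1 < pq.1.2 ∧ pq.2.1 < pq.2.2 ∧ pq.1 ≠ pq.2 ∧
            Inter ω pq.1 pq.2 = true)).card : ℝ) / 2)
      ≤ 8 * (m : ℝ) * (vcong17 G φ) ^ 2 :=
  stmt_17_general G hconn m hm φ hφ0 Ω Pr hPr0 PW hjoint Inter hconf
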